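/- Let A, B be sub-σ-algebras with ψ' = ψ'(A,B) > 0. Let (Aᵢ)_{i=1}^n be a finite A-measurable partition of Ω and (Bⱼ)_{j=1}^m a finite B-measurable partition of Ω. Define R(Aᵢ ∩ Bⱼ) = (1-ψ')⁻¹ P(Aᵢ ∩ Bⱼ) - (1-ψ')⁻¹ ψ' P(Aᵢ)P(Bⱼ). Then R(Aᵢ∩Bⱼ) ≥ 0 for all i,j, Σᵢ R(Aᵢ∩Bⱼ) = P(Bⱼ) for each j, and Σⱼ R(Aᵢ∩Bⱼ) = P(Aᵢ) for each i. -/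

import Mathlib

/-!
Since `ψ'` is the infimum of the ratios `P(A ∩ B) / (P(A) P(B))`, every cell satisfies
`ψ' P(Aᵢ) P(Bⱼ) ≤ P(Aᵢ ∩ Bⱼ)` (trivially when `P(Aᵢ) P(Bⱼ) = 0`), which is nonnegativity of
`R` as `ψ' < 1`. Summing over a partition turns `P(Aᵢ ∩ Bⱼ)` into a marginal and `P(Aᵢ)` into
`1`, so each marginal of `R` is `(1 - ψ')⁻¹ (1 - ψ')` times the corresponding marginal of `P`.
-/

open MeasureTheory Set Function

namespace MeasureTheory

variable {Ω ι : Type*} {m : MeasurableSpace Ω} (P : Measure Ω)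

theorem sum_measureReal_inter_of_iUnion_eq_univ [Fintype ι] [IsFiniteMeasure P]
    {A : ι → Set Ω} (hA : ∀ i, MeasurableSet (A i)) (hdisj : Pairwise (Disjoint on A))
    (hcov : ⋃ i, A i = univ) {s : Set Ω} (hs : MeasurableSet s) :
    ∑ i, P.real (A i ∩ s) = P.real s := by
  rw [← measureReal_iUnion_fintype
      (fun i j hij => (hdisj hij).mono inter_subset_left inter_subset_left)
      (fun i => (hA i).inter hs),
    ← iUnion_inter, hcov, univ_inter]

theorem sum_measureReal_of_iUnion_eq_univ [Fintype ι] [IsProbabilityMeasure P]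
    {A : ι → Set Ω} (hA : ∀ i, MeasurableSet (A i)) (hdisj : Pairwise (Disjoint on A))
    (hcov : ⋃ i, A i = univ) :
    ∑ i, P.real (A i) = 1 := by
  simpa using sum_measureReal_inter_of_iUnion_eq_univ P hA hdisj hcov MeasurableSet.univ

/-- The dependence coefficient `ψ'(𝒜, ℬ)`. -/
noncomputable def psiPrime (𝒜 ℬ : MeasurableSpace Ω) : ℝ :=
  sInf {r : ℝ | ∃ A B : Set Ω, MeasurableSet[𝒜] A ∧ MeasurableSet[ℬ] B ∧
    0 < P.real A * P.real B ∧ r = P.real (A ∩ B) / (P.real A * P.real B)}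

theorem psiPrime_mul_le_measureReal_inter {𝒜 ℬ : MeasurableSpace Ω} {A B : Set Ω}
    (hA : MeasurableSet[𝒜] A) (hB : MeasurableSet[ℬ] B) :
    psiPrime P 𝒜 ℬ * (P.real A * P.real B) ≤ P.real (A ∩ B) := by
  rcases (mul_nonneg measureReal_nonneg measureReal_nonneg).eq_or_lt with hzero | hpos
  · rw [← hzero, mul_zero]
    exact measureReal_nonneg
  · rw [← le_div_iff₀ hpos]
    exact csInf_le ⟨0, by rintro r ⟨A', B', -, -, -, rfl⟩; positivity⟩ ⟨A, B, hA, hB, hpos, rfl⟩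

/-- The quantity `R(A ∩ B)` of Bradley's lemma, for the parameter `ψ = ψ'`. -/
noncomputable def bradleyR (ψ : ℝ) (A B : Set Ω) : ℝ :=
  (1 - ψ)⁻¹ * P.real (A ∩ B) - (1 - ψ)⁻¹ * ψ * P.real A * P.real B

variable {P}

theorem bradleyR_comm (ψ : ℝ) (A B : Set Ω) : bradleyR P ψ B A = bradleyR P ψ A B := by
  rw [bradleyR, bradleyR, inter_comm, mul_right_comm _ (P.real B)]

theorem bradleyR_nonneg {ψ : ℝ} (hψ : ψ < 1) {A B : Set Ω}
    (h : ψ * (P.real A * P.real B) ≤ P.real (A ∩ B)) : 0 ≤ bradleyR P ψ A B := by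
  have hcoef : 0 ≤ (1 - ψ)⁻¹ := inv_nonneg.mpr (sub_nonneg.mpr hψ.le)
  calc 0 ≤ (1 - ψ)⁻¹ * (P.real (A ∩ B) - ψ * (P.real A * P.real B)) :=
        mul_nonneg hcoef (sub_nonneg.mpr h)
    _ = bradleyR P ψ A B := by rw [bradleyR]; ring

variable [Fintype ι] [IsProbabilityMeasure P] {ψ : ℝ} {A : ι → Set Ω}

theorem sum_bradleyR_left (hψ : ψ ≠ 1) (hA : ∀ i, MeasurableSet (A i))
    (hdisj : Pairwise (Disjoint on A)) (hcov : ⋃ i, A i = univ) {B : Set Ω}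
    (hB : MeasurableSet B) :
    ∑ i, bradleyR P ψ (A i) B = P.real B := by
  have hψ' : 1 - ψ ≠ 0 := sub_ne_zero.mpr hψ.symm
  simp only [bradleyR, Finset.sum_sub_distrib, ← Finset.mul_sum, ← Finset.sum_mul,
    sum_measureReal_inter_of_iUnion_eq_univ P hA hdisj hcov hB,
    sum_measureReal_of_iUnion_eq_univ P hA hdisj hcov]
  field_simp

theorem sum_bradleyR_right (hψ : ψ ≠ 1) (hA : ∀ i, MeasurableSet (A i))
    (hdisj : Pairwise (Disjoint on A)) (hcov : ⋃ i, A i = univ) {B : Set Ω}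
    (hB : MeasurableSet B) :
    ∑ i, bradleyR P ψ B (A i) = P.real B := by
  simpa only [bradleyR_comm] using sum_bradleyR_left hψ hA hdisj hcov hB

end MeasureTheory

theorem R_nonneg_and_marginals_general
    {Ω : Type*} {m : MeasurableSpace Ω} (P : Measure Ω) [IsProbabilityMeasure P]
    (𝒜 ℬ : MeasurableSpace Ω) (h𝒜 : 𝒜 ≤ m) (hℬ : ℬ ≤ m)
    (ψ' : ℝ)
    (hψdef : ψ' = sInf {r : ℝ | ∃ A B : Set Ω,
        MeasurableSet[𝒜] A ∧ MeasurableSet[ℬ] B ∧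
        0 < (P A).toReal * (P B).toReal ∧
        r = (P (A ∩ B)).toReal / ((P A).toReal * (P B).toReal)})
    (hψlt : ψ' < 1)
    (n mm : ℕ) (A : Fin n → Set Ω) (B : Fin mm → Set Ω)
    (hAmeas : ∀ i, MeasurableSet[𝒜] (A i)) (hBmeas : ∀ j, MeasurableSet[ℬ] (B j))
    (hAdisj : Pairwise (Function.onFun Disjoint A))
    (hBdisj : Pairwise (Function.onFun Disjoint B))
    (hAcov : (⋃ i, A i) = Set.univ) (hBcov : (⋃ j, B j) = Set.univ)
    (R : Fin n → Fin mm → ℝ)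
    (hRdef : ∀ i j, R i j = (1 - ψ')⁻¹ * (P (A i ∩ B j)).toReal -
        (1 - ψ')⁻¹ * ψ' * (P (A i)).toReal * (P (B j)).toReal) :
    (∀ i j, 0 ≤ R i j) ∧
    (∀ j, ∑ i, R i j = (P (B j)).toReal) ∧
    (∀ i, ∑ j, R i j = (P (A i)).toReal) := by
  have hψ : ψ' = psiPrime P 𝒜 ℬ := hψdef
  have hR : R = fun i j => bradleyR P ψ' (A i) (B j) := funext₂ hRdef
  subst hR
  have hAm i : MeasurableSet[m] (A i) := h𝒜 _ (hAmeas i)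
  have hBm j : MeasurableSet[m] (B j) := hℬ _ (hBmeas j)
  refine ⟨fun i j => bradleyR_nonneg hψlt ?_, fun j => ?_, fun i => ?_⟩
  · exact hψ ▸ psiPrime_mul_le_measureReal_inter P (hAmeas i) (hBmeas j)
  · exact sum_bradleyR_left hψlt.ne hAm hAdisj hAcov (hBm j)
  · exact sum_bradleyR_right hψlt.ne hBm hBdisj hBcov (hAm i)

/-- Properties of the auxiliary measure-like quantity `R(Aᵢ ∩ Bⱼ)` from Bradley's lemma:
nonnegativity and the two marginal identities. -/
theorem R_nonneg_and_marginals
    {Ω : Type*} {m : MeasurableSpace Ω} (P : Measure Ω) [IsProbabilityMeasure P]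
    (𝒜 ℬ : MeasurableSpace Ω) (h𝒜 : 𝒜 ≤ m) (hℬ : ℬ ≤ m)
    (ψ' : ℝ)
    (hψdef : ψ' = sInf {r : ℝ | ∃ A B : Set Ω,
        MeasurableSet[𝒜] A ∧ MeasurableSet[ℬ] B ∧
        0 < (P A).toReal * (P B).toReal ∧
        r = (P (A ∩ B)).toReal / ((P A).toReal * (P B).toReal)})
    (hψpos : 0 < ψ') (hψlt : ψ' < 1)
    (n mm : ℕ) (A : Fin n → Set Ω) (B : Fin mm → Set Ω)
    (hAmeas : ∀ i, MeasurableSet[𝒜] (A i)) (hBmeas : ∀ j, MeasurableSet[ℬ] (B j))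
    (hAdisj : Pairwise (Function.onFun Disjoint A))
    (hBdisj : Pairwise (Function.onFun Disjoint B))
    (hAcov : (⋃ i, A i) = Set.univ) (hBcov : (⋃ j, B j) = Set.univ)
    (R : Fin n → Fin mm → ℝ)
    (hRdef : ∀ i j, R i j = (1 - ψ')⁻¹ * (P (A i ∩ B j)).toReal -
        (1 - ψ')⁻¹ * ψ' * (P (A i)).toReal * (P (B j)).toReal) :
    (∀ i j, 0 ≤ R i j) ∧
    (∀ j, ∑ i, R i j = (P (B j)).toReal) ∧
    (∀ i, ∑ j, R i j = (P (A i)).toReal) :=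
  R_nonneg_and_marginals_general P 𝒜 ℬ h𝒜 hℬ ψ' hψdef hψlt n mm A B hAmeas hBmeas hAdisj hBdisj
    hAcov hBcov R hRdef
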